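/- For every integer t ≥ 2, setting k = 8t−6, the chordal ring mixed graph CRM(n, c) with n = k(k/2−1)+4 = 2(4t−3)(4t−4)+4 = 32t²−56t+28 and c = 24t²−44t+23 has diameter exactly k. -/
import Mathlib

/-- The arcs of the chordal ring mixed graph `CRM(n,c)`: `i → i+1`. -/
def crmArc (n : ℕ) (u v : ZMod n) : Prop := v = u + 1

/-- The edges of `CRM(n,c)`: `i ∼ i + c` for odd `i` (stated symmetrically). -/
def crmEdge (n c : ℕ) (u v : ZMod n) : Prop :=
  (u.val % 2 = 1 ∧ v = u + (c : ZMod n)) ∨ (v.val % 2 = 1 ∧ u = v + (c : ZMod n))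

/-- One step in the associated digraph of `CRM(n,c)` (edge or arc). -/
def crmStep (n c : ℕ) (u v : ZMod n) : Prop := crmEdge n c u v ∨ crmArc n u v

/-- `hasWalk step d u v` : there is a directed walk of length `d` from `u` to `v`. -/
def hasWalk {V : Type*} (step : V → V → Prop) : ℕ → V → V → Prop
  | 0, u, v => u = v
  | d + 1, u, v => ∃ w, step u w ∧ hasWalk step d w v

/-- Tiling membership for walks starting at an even vertex. -/
def memE (H a e : ℤ) : Prop :=
  (e = 1 ∧ 1 ≤ a ∧ a ≤ 8*H) ∨
  (2 ≤ e ∧ e ≤ 4*H ∧ e ≤ a ∧ a ≤ 8*H - e) ∨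
  (e = 0 ∧ 0 ≤ a ∧ a ≤ 8*H - 1) ∨
  (1 - 4*H ≤ e ∧ e ≤ -1 ∧ -e - 1 ≤ a ∧ a ≤ 8*H - 1 + e) ∨
  (e = -(4*H) ∧ 4*H - 1 ≤ a ∧ a ≤ 4*H) ∨
  (e = -(4*H) - 1 ∧ 4*H ≤ a ∧ a ≤ 4*H + 1)

lemma coverE (H : ℕ) (hH : 1 ≤ H) (x : ℕ) :
    ∃ a e m : ℤ, memE H a e ∧
      a + e*(24*(H:ℤ)^2+4*H+3) = x + m*(32*(H:ℤ)^2+8*H+4) := by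
  have hH' : (1:ℤ) ≤ (H:ℤ) := by exact_mod_cast hH
  induction x with
  | zero =>
    exact ⟨0, 0, 0, Or.inr (Or.inr (Or.inl ⟨rfl, le_refl 0, by linarith⟩)), by push_cast; ring⟩
  | succ x ih =>
    obtain ⟨a, e, m, hmem, heq⟩ := ih
    rcases hmem with ⟨he, ha1, ha2⟩ | ⟨he1, he2, ha1, ha2⟩ | ⟨he, ha1, ha2⟩ |
      ⟨he1, he2, ha1, ha2⟩ | ⟨he, ha1, ha2⟩ | ⟨he, ha1, ha2⟩
    · -- P1 : e = 1
      rcases lt_or_eq_of_le ha2 with h | h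
      · exact ⟨a+1, e, m, Or.inl ⟨he, by omega, by omega⟩,
          by push_cast; linear_combination heq⟩
      · -- jump to (4H, 4H), m += 3H-1
        refine ⟨4*H, 4*H, m + 3*H - 1, Or.inr (Or.inl ⟨by omega, le_refl _, le_refl _, by omega⟩), ?_⟩
        push_cast
        linear_combination heq - h - he*(24*(H:ℤ)^2+4*H+3)
    · -- P2 : 2 ≤ e ≤ 4H, a = 8H - e at cap
      rcases lt_or_eq_of_le ha2 with h | h
      · exact ⟨a+1, e, m, Or.inr (Or.inl ⟨he1, he2, by omega, by omega⟩),
          by push_cast; linear_combination heq⟩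
      · -- jump: e' = e - 4H - 3, a' = 4H + 2 - e, m -= 3H+2
        refine ⟨4*H + 2 - e, e - 4*H - 3, m - (3*H + 2), ?_, ?_⟩
        · rcases eq_or_lt_of_le he1 with h2 | h2
          · -- e = 2 : piece 6
            exact Or.inr (Or.inr (Or.inr (Or.inr (Or.inr ⟨by omega, by omega, by omega⟩))))
          rcases (show e = 3 ∨ 4 ≤ e by omega) with h3 | h3
          · -- e = 3 : piece 5
            exact Or.inr (Or.inr (Or.inr (Or.inr (Or.inl ⟨by omega, by omega, by omega⟩))))
          · -- e ≥ 4 : piece 4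
            exact Or.inr (Or.inr (Or.inr (Or.inl ⟨by omega, by omega, by omega, by omega⟩)))
        · push_cast
          linear_combination heq - h
    · -- P3 : e = 0
      rcases lt_or_eq_of_le ha2 with h | h
      · exact ⟨a+1, e, m, Or.inr (Or.inr (Or.inl ⟨he, by omega, by omega⟩)),
          by push_cast; linear_combination heq⟩
      · -- jump to (4H-1, 4H-1), m += 3H-1
        refine ⟨4*H - 1, 4*H - 1, m + 3*H - 1,
          Or.inr (Or.inl ⟨by omega, by omega, le_refl _, by omega⟩), ?_⟩
        push_cast
        linear_combination heq - h - he*(24*(H:ℤ)^2+4*H+3)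
    · -- P4 : 1-4H ≤ e ≤ -1, cap a = 8H - 1 + e
      rcases lt_or_eq_of_le ha2 with h | h
      · exact ⟨a+1, e, m, Or.inr (Or.inr (Or.inr (Or.inl ⟨he1, he2, by omega, by omega⟩))),
          by push_cast; linear_combination heq⟩
      · -- jump: e' = e + 4H - 1, a' = max(e',0): if e' ≥ 1, a' = e'; e' = 0, a' = 0
        refine ⟨e + 4*H - 1, e + 4*H - 1, m + 3*H - 1, ?_, ?_⟩
        · rcases (show e = 1 - 4*H ∨ e = 2 - 4*H ∨ 3 - 4*H ≤ e by omega) with h1 | h1 | h1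
          · -- e' = 0 : piece 3
            exact Or.inr (Or.inr (Or.inl ⟨by omega, by omega, by omega⟩))
          · -- e' = 1 : piece 1
            exact Or.inl ⟨by omega, by omega, by omega⟩
          · -- e' ≥ 2 : piece 2
            exact Or.inr (Or.inl ⟨by omega, by omega, le_refl _, by omega⟩)
        · push_cast
          linear_combination heq - h
    · -- P5 : e = -4H, cap a = 4H
      rcases lt_or_eq_of_le ha2 with h | h
      · exact ⟨a+1, e, m, Or.inr (Or.inr (Or.inr (Or.inr (Or.inl ⟨he, by omega, by omega⟩)))),
          by push_cast; linear_combination heq⟩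
      · -- jump to (0, -1), m += 3H - 1
        refine ⟨0, -1, m + 3*H - 1,
          Or.inr (Or.inr (Or.inr (Or.inl ⟨by omega, by omega, by omega, by omega⟩))), ?_⟩
        push_cast
        linear_combination heq - h - he*(24*(H:ℤ)^2+4*H+3)
    · -- P6 : e = -4H - 1, cap a = 4H + 1
      rcases lt_or_eq_of_le ha2 with h | h
      · exact ⟨a+1, e, m, Or.inr (Or.inr (Or.inr (Or.inr (Or.inr ⟨he, by omega, by omega⟩)))),
          by push_cast; linear_combination heq⟩
      · -- jump to (1, -2), m += 3H - 1
        refine ⟨1, -2, m + 3*H - 1,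
          Or.inr (Or.inr (Or.inr (Or.inl ⟨by omega, by omega, by omega, by omega⟩))), ?_⟩
        push_cast
        linear_combination heq - h - he*(24*(H:ℤ)^2+4*H+3)

/-- Tiling membership for walks starting at an odd vertex. -/
def memO (H a e : ℤ) : Prop :=
  (e = 1 ∧ 0 ≤ a ∧ a ≤ 8*H - 1) ∨
  (2 ≤ e ∧ e ≤ 4*H + 1 ∧ e - 1 ≤ a ∧ a ≤ 8*H + 1 - e) ∨
  (e = 0 ∧ 0 ≤ a ∧ a ≤ 8*H - 2) ∨
  (2 - 4*H ≤ e ∧ e ≤ -1 ∧ -e ≤ a ∧ a ≤ 8*H - 2 + e) ∨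
  (e = 1 - 4*H ∧ 4*H - 1 ≤ a ∧ a ≤ 4*H) ∨
  (e = -(4*H) ∧ 4*H ≤ a ∧ a ≤ 4*H + 1) ∨
  (e = -(4*H) - 1 ∧ a = 4*H + 1)

lemma coverO (H : ℕ) (hH : 1 ≤ H) (x : ℕ) :
    ∃ a e m : ℤ, memO H a e ∧
      a + e*(24*(H:ℤ)^2+4*H+3) = x + m*(32*(H:ℤ)^2+8*H+4) := by
  have hH' : (1:ℤ) ≤ (H:ℤ) := by exact_mod_cast hH
  induction x with
  | zero =>
    exact ⟨0, 0, 0, Or.inr (Or.inr (Or.inl ⟨rfl, le_refl 0, by linarith⟩)), by push_cast; ring⟩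
  | succ x ih =>
    obtain ⟨a, e, m, hmem, heq⟩ := ih
    rcases hmem with ⟨he, ha1, ha2⟩ | ⟨he1, he2, ha1, ha2⟩ | ⟨he, ha1, ha2⟩ |
      ⟨he1, he2, ha1, ha2⟩ | ⟨he, ha1, ha2⟩ | ⟨he, ha1, ha2⟩ | ⟨he, ha⟩
    · -- Q1 : e = 1, cap 8H-1 → (4H-1, 4H)
      rcases lt_or_eq_of_le ha2 with h | h
      · exact ⟨a+1, e, m, Or.inl ⟨he, by omega, by omega⟩,
          by push_cast; linear_combination heq⟩
      · refine ⟨4*H - 1, 4*H, m + 3*H - 1,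
          Or.inr (Or.inl ⟨by omega, by omega, by omega, by omega⟩), ?_⟩
        push_cast
        linear_combination heq - h - he*(24*(H:ℤ)^2+4*H+3)
    · -- Q2 : 2 ≤ e ≤ 4H+1, cap a = 8H+1-e → e' = e-4H-3, a' = 4H+3-e
      rcases lt_or_eq_of_le ha2 with h | h
      · exact ⟨a+1, e, m, Or.inr (Or.inl ⟨he1, he2, by omega, by omega⟩),
          by push_cast; linear_combination heq⟩
      · refine ⟨4*H + 3 - e, e - 4*H - 3, m - (3*H + 2), ?_, ?_⟩
        · rcases (show e = 2 ∨ e = 3 ∨ e = 4 ∨ 5 ≤ e by omega) with h2 | h2 | h2 | h2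
          · -- e' = -4H-1 : Q7
            exact Or.inr (Or.inr (Or.inr (Or.inr (Or.inr (Or.inr ⟨by omega, by omega⟩)))))
          · -- e' = -4H : Q6
            exact Or.inr (Or.inr (Or.inr (Or.inr (Or.inr (Or.inl ⟨by omega, by omega, by omega⟩)))))
          · -- e' = 1-4H : Q5
            exact Or.inr (Or.inr (Or.inr (Or.inr (Or.inl ⟨by omega, by omega, by omega⟩))))
          · -- Q4
            exact Or.inr (Or.inr (Or.inr (Or.inl ⟨by omega, by omega, by omega, by omega⟩)))
        · push_cast
          linear_combination heq - h
    · -- Q3 : e = 0, cap 8H-2 → (4H-2, 4H-1)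
      rcases lt_or_eq_of_le ha2 with h | h
      · exact ⟨a+1, e, m, Or.inr (Or.inr (Or.inl ⟨he, by omega, by omega⟩)),
          by push_cast; linear_combination heq⟩
      · refine ⟨4*H - 2, 4*H - 1, m + 3*H - 1,
          Or.inr (Or.inl ⟨by omega, by omega, by omega, by omega⟩), ?_⟩
        push_cast
        linear_combination heq - h - he*(24*(H:ℤ)^2+4*H+3)
    · -- Q4 : 2-4H ≤ e ≤ -1, cap a = 8H-2+e → e' = e+4H-1, a' = e'-1 (or Q1)
      rcases lt_or_eq_of_le ha2 with h | h
      · exact ⟨a+1, e, m, Or.inr (Or.inr (Or.inr (Or.inl ⟨he1, he2, by omega, by omega⟩))),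
          by push_cast; linear_combination heq⟩
      · refine ⟨e + 4*H - 2, e + 4*H - 1, m + 3*H - 1, ?_, ?_⟩
        · rcases (show e = 2 - 4*H ∨ 3 - 4*H ≤ e by omega) with h1 | h1
          · -- e' = 1 : Q1
            exact Or.inl ⟨by omega, by omega, by omega⟩
          · -- e' ≥ 2 : Q2
            exact Or.inr (Or.inl ⟨by omega, by omega, by omega, by omega⟩)
        · push_cast
          linear_combination heq - h
    · -- Q5 : e = 1-4H, cap 4H → (0,0)
      rcases lt_or_eq_of_le ha2 with h | h
      · exact ⟨a+1, e, m, Or.inr (Or.inr (Or.inr (Or.inr (Or.inl ⟨he, by omega, by omega⟩)))),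
          by push_cast; linear_combination heq⟩
      · refine ⟨0, 0, m + 3*H - 1,
          Or.inr (Or.inr (Or.inl ⟨rfl, le_refl 0, by omega⟩)), ?_⟩
        push_cast
        linear_combination heq - h - he*(24*(H:ℤ)^2+4*H+3)
    · -- Q6 : e = -4H, cap 4H+1 → (1, -1)
      rcases lt_or_eq_of_le ha2 with h | h
      · exact ⟨a+1, e, m, Or.inr (Or.inr (Or.inr (Or.inr (Or.inr (Or.inl ⟨he, by omega, by omega⟩))))),
          by push_cast; linear_combination heq⟩
      · refine ⟨1, -1, m + 3*H - 1,
          Or.inr (Or.inr (Or.inr (Or.inl ⟨by omega, by omega, by omega, by omega⟩))), ?_⟩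
        push_cast
        linear_combination heq - h - he*(24*(H:ℤ)^2+4*H+3)
    · -- Q7 : e = -4H-1, a = 4H+1 → (4H, 4H+1), m += 6H+1
      refine ⟨4*H, 4*H + 1, m + 6*H + 1,
        Or.inr (Or.inl ⟨by omega, by omega, by omega, by omega⟩), ?_⟩
      push_cast
      linear_combination heq - ha - he*(24*(H:ℤ)^2+4*H+3)

lemma no_rep (H a e m : ℤ) (hH : 1 ≤ H) (ha : 0 ≤ a) (h1 : e ≤ a) (h2 : -e ≤ a + 1)
    (h3 : a + e ≤ 8*H + 1) (h4 : a - e ≤ 8*H + 1)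
    (heq : a + e*(24*H^2+4*H+3) = 16*H^2+8*H+2 + m*(32*H^2+8*H+4)) : False := by
  have hMq : (4*m - 3*e)*(8*H^2+2*H+1) = a - 2*H*e - (16*H^2+8*H+2) := by
    linear_combination -heq
  have hub : a - 2*H*e ≤ 8*H^2+6*H := by
    rcases le_or_gt a (4*H) with h | h
    · nlinarith [mul_le_mul_of_nonneg_left h2 (show (0:ℤ) ≤ 2*H by positivity)]
    · nlinarith [mul_le_mul_of_nonneg_left (show -e ≤ 8*H+1-a by linarith)
        (show (0:ℤ) ≤ 2*H by positivity)]
  have hlb : -(8*H^2) ≤ a - 2*H*e := by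
    rcases le_or_gt a (4*H) with h | h
    · nlinarith [mul_le_mul_of_nonneg_left h1 (show (0:ℤ) ≤ 2*H by positivity)]
    · nlinarith [mul_le_mul_of_nonneg_left (show e ≤ 8*H+1-a by linarith)
        (show (0:ℤ) ≤ 2*H by positivity)]
  have hM2 : 4*m - 3*e = -2 ∨ 4*m - 3*e = -3 := by
    have hq : (0:ℤ) < 8*H^2+2*H+1 := by positivity
    have c1 : (4*m - 3*e)*(8*H^2+2*H+1) ≤ -(8*H^2)-2*H-2 := by nlinarith
    have c2 : -(24*H^2)-8*H-2 ≤ (4*m - 3*e)*(8*H^2+2*H+1) := by nlinarith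
    have hle : 4*m - 3*e ≤ -2 := by nlinarith
    have hge : -3 ≤ 4*m - 3*e := by nlinarith
    omega
  rcases hM2 with hM | hM
  · -- M = -2 : a - 2He = 4H, e ≡ 2 (mod 4)
    have hae : a - 2*H*e = 4*H := by
      have := hMq; rw [hM] at this; linarith
    have he4 : e % 4 = 2 := by omega
    rcases (show 2 ≤ e ∨ e ≤ -2 by omega) with h5 | h5
    · nlinarith
    · have ha0 : a = 0 := by nlinarith
      have : e = -2 := by nlinarith
      omega
  · -- M = -3 : a - 2He = -8H² + 2H - 1
    have hae : a - 2*H*e = -(8*H^2) + 2*H - 1 := by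
      have := hMq; rw [hM] at this; linarith
    rcases le_or_gt a (4*H) with h | h
    · nlinarith [mul_le_mul_of_nonneg_left h1 (show (0:ℤ) ≤ 2*H by positivity)]
    · nlinarith [mul_le_mul_of_nonneg_left (show e ≤ 8*H+1-a by linarith)
        (show (0:ℤ) ≤ 2*H by positivity)]

section walklemmas

variable {n c : ℕ} [NeZero n]

lemma parity_add_one (hn2 : 2 ∣ n) (u : ZMod n) :
    (u + 1).val % 2 = (u.val + 1) % 2 := by
  have h1 : (1 : ZMod n).val % 2 = 1 % 2 := by
    rw [show (1 : ZMod n) = ((1:ℕ) : ZMod n) by push_cast; ring, ZMod.val_natCast,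
      Nat.mod_mod_of_dvd _ hn2]
  rw [ZMod.val_add, Nat.mod_mod_of_dvd _ hn2, Nat.add_mod, h1, ← Nat.add_mod]

lemma parity_add_c (hn2 : 2 ∣ n) (hc : c % 2 = 1) (u : ZMod n) :
    (u + (c : ZMod n)).val % 2 = (u.val + 1) % 2 := by
  have h1 : (c : ZMod n).val % 2 = 1 := by
    rw [ZMod.val_natCast, Nat.mod_mod_of_dvd _ hn2, hc]
  rw [ZMod.val_add, Nat.mod_mod_of_dvd _ hn2, Nat.add_mod, h1, Nat.add_mod u.val 1, Nat.one_mod_eq_one.mpr (by omega)]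

lemma walk_realize (hn2 : 2 ∣ n) (hc : c % 2 = 1) :
    ∀ d a p q : ℕ, a + p + q = d → ∀ u : ZMod n,
    ((u.val % 2 = 0 → q ≤ p + a + 1 → p ≤ q + a →
      hasWalk (crmStep n c) d u (u + (a : ZMod n) + (p : ZMod n) * c - (q : ZMod n) * c))
    ∧ (u.val % 2 = 1 → p ≤ q + a + 1 → q ≤ p + a →
      hasWalk (crmStep n c) d u (u + (a : ZMod n) + (p : ZMod n) * c - (q : ZMod n) * c))) := by
  intro d
  induction d with
  | zero =>
    intro a p q habc u
    have ha : a = 0 := by omega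
    have hp : p = 0 := by omega
    have hq : q = 0 := by omega
    subst ha; subst hp; subst hq
    constructor <;> intro _ _ _ <;> · show u = _; push_cast; ring
  | succ d ih =>
    intro a p q habc u
    constructor
    · -- u even
      intro hu hc1 hc2
      rcases Nat.eq_zero_or_pos q with hq | hq
      · -- q = 0 : must have a > 0 (else p = 0 and d+1 = 0)
        have hapos : 0 < a := by omega
        refine ⟨u + 1, Or.inr rfl, ?_⟩
        have hw : (u + 1).val % 2 = 1 := by
          rw [parity_add_one hn2, Nat.add_mod, hu]
        have := ((ih (a-1) p q (by omega) (u+1)).2) hw (by omega) (by omega)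
        have hcast : ((a - 1 : ℕ) : ZMod n) = (a : ZMod n) - 1 := by
          have : a - 1 + 1 = a := by omega
          calc ((a - 1 : ℕ) : ZMod n) = ((a - 1 + 1 : ℕ) : ZMod n) - 1 := by push_cast; ring
          _ = (a : ZMod n) - 1 := by rw [this]
        rw [hcast] at this
        convert this using 1
        ring
      · -- q > 0 : step -c
        refine ⟨u - (c : ZMod n), Or.inl (Or.inr ⟨?_, by ring⟩), ?_⟩
        · have := parity_add_c hn2 hc (u - (c : ZMod n))
          rw [sub_add_cancel] at this
          omega
        · have hw : (u - (c : ZMod n)).val % 2 = 1 := by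
            have := parity_add_c hn2 hc (u - (c : ZMod n))
            rw [sub_add_cancel] at this
            omega
          have := ((ih a p (q-1) (by omega) (u - (c : ZMod n))).2) hw (by omega) (by omega)
          have hcast : ((q - 1 : ℕ) : ZMod n) = (q : ZMod n) - 1 := by
            have h : q - 1 + 1 = q := by omega
            calc ((q - 1 : ℕ) : ZMod n) = ((q - 1 + 1 : ℕ) : ZMod n) - 1 := by push_cast; ring
            _ = (q : ZMod n) - 1 := by rw [h]
          rw [hcast] at this
          convert this using 1
          ring
    · -- u odd
      intro hu hc1 hc2
      rcases Nat.eq_zero_or_pos p with hp | hp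
      · have hapos : 0 < a := by omega
        refine ⟨u + 1, Or.inr rfl, ?_⟩
        have hw : (u + 1).val % 2 = 0 := by
          rw [parity_add_one hn2, Nat.add_mod, hu]
        have := ((ih (a-1) p q (by omega) (u+1)).1) hw (by omega) (by omega)
        have hcast : ((a - 1 : ℕ) : ZMod n) = (a : ZMod n) - 1 := by
          have h : a - 1 + 1 = a := by omega
          calc ((a - 1 : ℕ) : ZMod n) = ((a - 1 + 1 : ℕ) : ZMod n) - 1 := by push_cast; ring
          _ = (a : ZMod n) - 1 := by rw [h]
        rw [hcast] at this
        convert this using 1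
        ring
      · -- p > 0 : step +c
        refine ⟨u + (c : ZMod n), Or.inl (Or.inl ⟨hu, rfl⟩), ?_⟩
        have hw : (u + (c : ZMod n)).val % 2 = 0 := by
          rw [parity_add_c hn2 hc, Nat.add_mod, hu]
        have := ((ih a (p-1) q (by omega) (u + (c : ZMod n))).1) hw (by omega) (by omega)
        have hcast : ((p - 1 : ℕ) : ZMod n) = (p : ZMod n) - 1 := by
          have h : p - 1 + 1 = p := by omega
          calc ((p - 1 : ℕ) : ZMod n) = ((p - 1 + 1 : ℕ) : ZMod n) - 1 := by push_cast; ring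
          _ = (p : ZMod n) - 1 := by rw [h]
        rw [hcast] at this
        convert this using 1
        ring

lemma walk_extract (hn2 : 2 ∣ n) (hc : c % 2 = 1) :
    ∀ d (u v : ZMod n), hasWalk (crmStep n c) d u v →
    ∃ p q : ℕ, p + q ≤ d ∧ 2*p ≤ d + u.val % 2 ∧ 2*q ≤ d + 1 - u.val % 2 ∧
      v = u + ((d - (p+q) : ℕ) : ZMod n) + (p : ZMod n) * c - (q : ZMod n) * c := by
  intro d
  induction d with
  | zero =>
    intro u v huv
    exact ⟨0, 0, by omega, by omega, by omega, by rw [← huv]; push_cast; ring⟩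
  | succ d ih =>
    intro u v huv
    obtain ⟨w, hstep, hwalk⟩ := huv
    have hu2 : u.val % 2 = 0 ∨ u.val % 2 = 1 := Nat.mod_two_eq_zero_or_one _
    rcases hstep with (⟨hup, hw⟩ | ⟨hwp, hw⟩) | hw
    · -- +c chord, u odd, w = u + c
      obtain ⟨p, q, hpq, hp, hq, hv⟩ := ih w v hwalk
      have hwpar : w.val % 2 = 0 := by
        rw [hw, parity_add_c hn2 hc, Nat.add_mod, hup]
      refine ⟨p + 1, q, by omega, by omega, by omega, ?_⟩
      have hd : d + 1 - (p + 1 + q) = d - (p + q) := by omega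
      rw [hd, hv, hw]
      push_cast
      ring
    · -- -c chord, w odd, u = w + c
      obtain ⟨p, q, hpq, hp, hq, hv⟩ := ih w v hwalk
      have hupar : u.val % 2 = 0 := by
        rw [hw, parity_add_c hn2 hc, Nat.add_mod, hwp]
      refine ⟨p, q + 1, by omega, by omega, by omega, ?_⟩
      have hd : d + 1 - (p + (q + 1)) = d - (p + q) := by omega
      rw [hd, hv, show w = u - (c : ZMod n) by rw [hw]; ring]
      push_cast
      ring
    · -- arc, w = u + 1
      obtain ⟨p, q, hpq, hp, hq, hv⟩ := ih w v hwalk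
      have hwpar : w.val % 2 = (u.val + 1) % 2 := by rw [hw, parity_add_one hn2]
      refine ⟨p, q, by omega, by omega, by omega, ?_⟩
      have hd : d + 1 - (p + q) = (d - (p + q)) + 1 := by omega
      rw [hd, hv, hw]
      push_cast
      ring

end walklemmas

section master

variable (H : ℕ)

lemma hn2 : 2 ∣ 32*H^2+8*H+4 := ⟨16*H^2+4*H+2, by ring⟩

lemma hcodd : (24*H^2+4*H+3) % 2 = 1 := by
  have h : 24*H^2+4*H+3 = 1 + (12*H^2+2*H+1)*2 := by ring
  rw [h, Nat.add_mul_mod_self_right]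

lemma endpoint_eq [NeZero (32*H^2+8*H+4)] (a e m : ℤ) (hb0 : 0 ≤ a)
    (δ : ZMod (32*H^2+8*H+4))
    (heq : a + e*(24*(H:ℤ)^2+4*H+3) = (δ.val : ℤ) + m*(32*(H:ℤ)^2+8*H+4)) :
    (a.toNat : ZMod (32*H^2+8*H+4)) +
      (e.toNat : ZMod (32*H^2+8*H+4)) * ((24*H^2+4*H+3 : ℕ) : ZMod (32*H^2+8*H+4)) -
      ((-e).toNat : ZMod (32*H^2+8*H+4)) * ((24*H^2+4*H+3 : ℕ) : ZMod (32*H^2+8*H+4)) = δ := by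
  have eN : ((32*H^2+8*H+4 : ℕ) : ℤ) = 32*(H:ℤ)^2+8*(H:ℤ)+4 := by push_cast; ring
  have eC : ((24*H^2+4*H+3 : ℕ) : ℤ) = 24*(H:ℤ)^2+4*(H:ℤ)+3 := by push_cast; ring
  calc (a.toNat : ZMod (32*H^2+8*H+4)) +
      (e.toNat : ZMod (32*H^2+8*H+4)) * ((24*H^2+4*H+3 : ℕ) : ZMod (32*H^2+8*H+4)) -
      ((-e).toNat : ZMod (32*H^2+8*H+4)) * ((24*H^2+4*H+3 : ℕ) : ZMod (32*H^2+8*H+4))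
      = (((a.toNat : ℤ) + ((e.toNat : ℤ) - ((-e).toNat : ℤ)) * ((24*H^2+4*H+3 : ℕ) : ℤ) : ℤ) :
          ZMod (32*H^2+8*H+4)) := by push_cast; ring
    _ = (((a + e * (24*(H:ℤ)^2+4*(H:ℤ)+3)) : ℤ) : ZMod (32*H^2+8*H+4)) := by
        rw [eC, show ((a.toNat : ℤ)) = a by omega,
          show ((e.toNat : ℤ) - ((-e).toNat : ℤ)) = e by omega]
    _ = ((((δ.val : ℤ) + m*(32*(H:ℤ)^2+8*(H:ℤ)+4)) : ℤ) : ZMod (32*H^2+8*H+4)) := by rw [heq]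
    _ = δ := by
        rw [← eN, Int.cast_add, Int.cast_mul, Int.cast_natCast, Int.cast_natCast,
          ZMod.natCast_self, mul_zero, add_zero, ZMod.natCast_val, ZMod.cast_id]

lemma crm_upper (hH : 1 ≤ H) (u v : ZMod (32*H^2+8*H+4)) :
    ∃ d ≤ 8*H+2, hasWalk (crmStep (32*H^2+8*H+4) (24*H^2+4*H+3)) d u v := by
  haveI : NeZero (32*H^2+8*H+4) := ⟨by positivity⟩
  have hH' : (1:ℤ) ≤ (H:ℤ) := by exact_mod_cast hH
  rcases Nat.mod_two_eq_zero_or_one u.val with hu | hu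
  · obtain ⟨a, e, m, hmem, heq⟩ := coverE H hH ((v - u).val)
    have hb : (0:ℤ) ≤ a ∧ e ≤ a ∧ -e ≤ a + 1 ∧ a + e ≤ 8*(H:ℤ)+2 ∧ a - e ≤ 8*(H:ℤ)+2 := by
      rcases hmem with ⟨h1,h2,h3⟩|⟨h1,h2,h3,h4⟩|⟨h1,h2,h3⟩|⟨h1,h2,h3,h4⟩|⟨h1,h2,h3⟩|⟨h1,h2,h3⟩ <;>
        omega
    obtain ⟨hb0, hb1, hb2, hb3, hb4⟩ := hb
    refine ⟨a.toNat + e.toNat + (-e).toNat, by omega, ?_⟩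
    have hw := (walk_realize (hn2 H) (hcodd H) (a.toNat + e.toNat + (-e).toNat)
      a.toNat e.toNat (-e).toNat rfl u).1 hu (by omega) (by omega)
    have hend := endpoint_eq H a e m hb0 (v - u) heq
    have hfin : u + (a.toNat : ZMod (32*H^2+8*H+4)) +
        (e.toNat : ZMod (32*H^2+8*H+4)) * ((24*H^2+4*H+3 : ℕ) : ZMod (32*H^2+8*H+4)) -
        ((-e).toNat : ZMod (32*H^2+8*H+4)) * ((24*H^2+4*H+3 : ℕ) : ZMod (32*H^2+8*H+4)) = v := by
      rw [show ∀ x y z w : ZMod (32*H^2+8*H+4), x + y + z - w = x + (y + z - w) from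
        fun x y z w => by ring, hend]
      ring
    rw [← hfin]
    exact hw
  · obtain ⟨a, e, m, hmem, heq⟩ := coverO H hH ((v - u).val)
    have hb : (0:ℤ) ≤ a ∧ e ≤ a + 1 ∧ -e ≤ a ∧ a + e ≤ 8*(H:ℤ)+2 ∧ a - e ≤ 8*(H:ℤ)+2 := by
      rcases hmem with ⟨h1,h2,h3⟩|⟨h1,h2,h3,h4⟩|⟨h1,h2,h3⟩|⟨h1,h2,h3,h4⟩|⟨h1,h2,h3⟩|⟨h1,h2,h3⟩|⟨h1,h2⟩ <;>
        omega
    obtain ⟨hb0, hb1, hb2, hb3, hb4⟩ := hb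
    refine ⟨a.toNat + e.toNat + (-e).toNat, by omega, ?_⟩
    have hw := (walk_realize (hn2 H) (hcodd H) (a.toNat + e.toNat + (-e).toNat)
      a.toNat e.toNat (-e).toNat rfl u).2 hu (by omega) (by omega)
    have hend := endpoint_eq H a e m hb0 (v - u) heq
    have hfin : u + (a.toNat : ZMod (32*H^2+8*H+4)) +
        (e.toNat : ZMod (32*H^2+8*H+4)) * ((24*H^2+4*H+3 : ℕ) : ZMod (32*H^2+8*H+4)) -
        ((-e).toNat : ZMod (32*H^2+8*H+4)) * ((24*H^2+4*H+3 : ℕ) : ZMod (32*H^2+8*H+4)) = v := by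
      rw [show ∀ x y z w : ZMod (32*H^2+8*H+4), x + y + z - w = x + (y + z - w) from
        fun x y z w => by ring, hend]
      ring
    rw [← hfin]
    exact hw

lemma crm_lower (hH : 1 ≤ H) :
    ∃ u v : ZMod (32*H^2+8*H+4), ∀ d < 8*H+2,
      ¬ hasWalk (crmStep (32*H^2+8*H+4) (24*H^2+4*H+3)) d u v := by
  haveI : NeZero (32*H^2+8*H+4) := ⟨by positivity⟩
  have hH' : (1:ℤ) ≤ (H:ℤ) := by exact_mod_cast hH
  refine ⟨0, ((16*H^2+8*H+2 : ℕ) : ZMod (32*H^2+8*H+4)), ?_⟩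
  intro d hd hwalk
  obtain ⟨p, q, hpq, hp, hq, hv⟩ := walk_extract (hn2 H) (hcodd H) d 0 _ hwalk
  rw [ZMod.val_zero] at hp hq
  have key : ((16*(H:ℤ)^2+8*(H:ℤ)+2 : ℤ) : ZMod (32*H^2+8*H+4)) =
      (((d:ℤ) - p - q + ((p:ℤ) - q)*(24*(H:ℤ)^2+4*(H:ℤ)+3) : ℤ) : ZMod (32*H^2+8*H+4)) := by
    push_cast [Nat.cast_sub hpq] at hv ⊢
    rw [hv]
    ring
  rw [ZMod.intCast_eq_intCast_iff] at key
  obtain ⟨m, hm⟩ := key.dvd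
  refine no_rep H ((d:ℤ) - p - q) ((p:ℤ) - q) m hH' (by omega) (by omega) (by omega)
    (by omega) (by omega) ?_
  have hNc : ((32*H^2+8*H+4 : ℕ) : ℤ) = 32*(H:ℤ)^2+8*(H:ℤ)+4 := by push_cast; ring
  rw [hNc] at hm
  linarith [hm]

end master

/-- For every $t ≥ 2$, with $k = 8t-6$, the chordal ring mixed graph $CRM(n,c)$ with
$n = k(k/2-1)+4 = 2(4t-3)(4t-4)+4 = 32t^2-56t+28$ and $c = 24t^2-44t+23$ has diameter
exactly $k$. -/
theorem CRM_diameter_8t_sub_6 (t : ℕ) (ht : 2 ≤ t) :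
    32 * t ^ 2 - 56 * t + 28 = (8 * t - 6) * ((8 * t - 6) / 2 - 1) + 4 ∧
    32 * t ^ 2 - 56 * t + 28 = 2 * (4 * t - 3) * (4 * t - 4) + 4 ∧
    (∀ u v : ZMod (32 * t ^ 2 - 56 * t + 28),
      ∃ d ≤ 8 * t - 6,
        hasWalk (crmStep (32 * t ^ 2 - 56 * t + 28) (24 * t ^ 2 - 44 * t + 23)) d u v) ∧
    (∃ u v : ZMod (32 * t ^ 2 - 56 * t + 28),
      ∀ d < 8 * t - 6,
        ¬ hasWalk (crmStep (32 * t ^ 2 - 56 * t + 28) (24 * t ^ 2 - 44 * t + 23)) d u v) := by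
  obtain ⟨H, rfl⟩ : ∃ H, t = H + 1 := ⟨t - 1, by omega⟩
  have hH : 1 ≤ H := by omega
  have h56 : 56*(H+1) ≤ 32*(H+1)^2 := by nlinarith
  have h44 : 44*(H+1) ≤ 24*(H+1)^2 := by nlinarith
  have hNe : 32*(H+1)^2 - 56*(H+1) + 28 = 32*H^2+8*H+4 := by zify [h56]; ring
  have hCe : 24*(H+1)^2 - 44*(H+1) + 23 = 24*H^2+4*H+3 := by zify [h44]; ring
  have hke : 8*(H+1) - 6 = 8*H+2 := by omega
  refine ⟨?_, ?_, ?_, ?_⟩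
  · have h1 : (8*(H+1) - 6)/2 = 4*H + 1 := by omega
    rw [h1, hNe, hke]
    have : (8*H+2)*(4*H+1-1)+4 = 32*H^2+8*H+4 := by
      have h2 : 4*H+1-1 = 4*H := by omega
      rw [h2]; ring
    omega
  · rw [hNe]
    have h1 : 4*(H+1)-3 = 4*H+1 := by omega
    have h2 : 4*(H+1)-4 = 4*H := by omega
    rw [h1, h2]; ring
  · rw [hNe, hCe, hke]
    exact crm_upper H hH
  · rw [hNe, hCe, hke]
    exact crm_lower H hH
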